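/- arXiv:2510.18126 — 2 statements merged into one kernel-verified Lean document; each statement's English description precedes it below -/
import Mathlib

section
/- For any θ₁, θ₂ ∈ [0,1], the Kullback–Leibler divergence between f_{θ₁} and f_{θ₂} satisfies KL(f_{θ₁}, f_{θ₂}) = (θ₂ − θ₁) + √(2θ₁)·(√(2θ₁) − √(2θ₂)). In particular KL(f_{θ₁}, f_{θ₂}) → 0 as |θ₁ − θ₂| → 0. -/
open MeasureTheory Real Set

noncomputable section KLAux

def gaussKL (t : ℝ) : ℝ := Real.exp (-(t ^ 2) / 2)

lemma gaussKL_pos (t : ℝ) : 0 < gaussKL t := Real.exp_pos _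

lemma gaussKL_cont : Continuous gaussKL := by
  unfold gaussKL; continuity

lemma gaussKL_int : Integrable gaussKL := by
  have h := integrable_exp_neg_mul_sq (b := (1/2 : ℝ)) (by norm_num)
  convert h using 2 with t
  unfold gaussKL; ring_nf

lemma gaussKL_total : ∫ t, gaussKL t = Real.sqrt (2 * Real.pi) := by
  have h := integral_gaussian (1/2 : ℝ)
  have : ∀ t : ℝ, gaussKL t = Real.exp (-(1/2) * t ^ 2) := by
    intro t; unfold gaussKL; ring_nf
  simp_rw [this, h]
  rw [show ((2:ℝ)*Real.pi) = Real.pi/(1/2) by ring]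

lemma id_gaussKL_int : Integrable (fun t => t * gaussKL t) := by
  have h := integrable_mul_exp_neg_mul_sq (b := (1/2 : ℝ)) (by norm_num)
  convert h using 2 with t
  unfold gaussKL; ring_nf

lemma id_gaussKL_zero : ∫ t, t * gaussKL t = 0 := by
  have h1 : ∫ t : ℝ, (-t) * gaussKL (-t) = ∫ t : ℝ, t * gaussKL t :=
    integral_neg_eq_self (fun t : ℝ => t * gaussKL t) volume
  have h2 : ∀ t : ℝ, (-t) * gaussKL (-t) = -(t * gaussKL t) := by
    intro t; unfold gaussKL; ring_nf
  simp_rw [h2, integral_neg] at h1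
  linarith

lemma sqrt2pi_pos : 0 < Real.sqrt (2 * Real.pi) :=
  Real.sqrt_pos.2 (by positivity)


def PhiKL (t : ℝ) : ℝ := (Real.sqrt (2 * Real.pi))⁻¹ * ∫ u in Set.Iic t, gaussKL u

lemma PhiKL_eq (t : ℝ) :
    PhiKL t = (Real.sqrt (2 * Real.pi))⁻¹ *
      ((∫ u in Set.Iic (0:ℝ), gaussKL u) + ∫ u in (0:ℝ)..t, gaussKL u) := by
  unfold PhiKL
  rw [← intervalIntegral.integral_Iic_sub_Iic (gaussKL_int.integrableOn)
    (gaussKL_int.integrableOn)]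
  ring

lemma PhiKL_hasDeriv (t : ℝ) :
    HasDerivAt PhiKL ((Real.sqrt (2 * Real.pi))⁻¹ * gaussKL t) t := by
  have hftc : HasDerivAt (fun u => ∫ x in (0:ℝ)..u, gaussKL x) (gaussKL t) t :=
    intervalIntegral.integral_hasDerivAt_right (gaussKL_int.intervalIntegrable)
      gaussKL_cont.aestronglyMeasurable.stronglyMeasurableAtFilter
      gaussKL_cont.continuousAt
  have h : HasDerivAt (fun u => (Real.sqrt (2 * Real.pi))⁻¹ *
      ((∫ x in Set.Iic (0:ℝ), gaussKL x) + ∫ x in (0:ℝ)..u, gaussKL x))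
      ((Real.sqrt (2 * Real.pi))⁻¹ * gaussKL t) t :=
    ((hftc.const_add _).const_mul _)
  exact h.congr_of_eventuallyEq (Filter.Eventually.of_forall fun u => PhiKL_eq u)

lemma intervalIntegral_gaussKL_pos {a b : ℝ} (h : a < b) :
    0 < ∫ u in a..b, gaussKL u :=
  intervalIntegral.intervalIntegral_pos_of_pos (gaussKL_int.intervalIntegrable)
    gaussKL_pos h

lemma PhiKL_strictMono : StrictMono PhiKL := by
  intro a b hab
  rw [PhiKL_eq a, PhiKL_eq b]
  have h : (∫ u in (0:ℝ)..a, gaussKL u) < ∫ u in (0:ℝ)..b, gaussKL u := by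
    have hsplit : (∫ u in (0:ℝ)..b, gaussKL u) =
        (∫ u in (0:ℝ)..a, gaussKL u) + ∫ u in a..b, gaussKL u :=
      (intervalIntegral.integral_add_adjacent_intervals
        (gaussKL_int.intervalIntegrable) (gaussKL_int.intervalIntegrable)).symm
    linarith [intervalIntegral_gaussKL_pos hab]
  exact mul_lt_mul_of_pos_left (by linarith) (inv_pos.2 sqrt2pi_pos)

lemma PhiKL_mem (t : ℝ) : PhiKL t ∈ Set.Ioo (0:ℝ) 1 := by
  have hIic_pos : 0 < ∫ u in Set.Iic t, gaussKL u := by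
    have h1 : (∫ u in Set.Iic t, gaussKL u) - ∫ u in Set.Iic (t-1), gaussKL u =
        ∫ u in (t-1)..t, gaussKL u :=
      intervalIntegral.integral_Iic_sub_Iic gaussKL_int.integrableOn gaussKL_int.integrableOn
    have h2 : 0 ≤ ∫ u in Set.Iic (t-1), gaussKL u :=
      setIntegral_nonneg measurableSet_Iic fun u _ => (gaussKL_pos u).le
    have h3 := intervalIntegral_gaussKL_pos (show t - 1 < t by linarith)
    linarith
  have hIic_lt : (∫ u in Set.Iic t, gaussKL u) < Real.sqrt (2 * Real.pi) := by
    have hsplit : (∫ u in Set.Iic t, gaussKL u) + ∫ u in Set.Ioi t, gaussKL u =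
        ∫ u, gaussKL u :=
      intervalIntegral.integral_Iic_add_Ioi gaussKL_int.integrableOn gaussKL_int.integrableOn
    have h1 : (∫ u in Set.Iic (t+1), gaussKL u) - ∫ u in Set.Iic t, gaussKL u =
        ∫ u in t..(t+1), gaussKL u :=
      intervalIntegral.integral_Iic_sub_Iic gaussKL_int.integrableOn gaussKL_int.integrableOn
    have h4 : (∫ u in Set.Iic (t+1), gaussKL u) ≤ ∫ u, gaussKL u :=
      setIntegral_le_integral gaussKL_int
        (Filter.Eventually.of_forall fun u => (gaussKL_pos u).le)
    have h3 := intervalIntegral_gaussKL_pos (show t < t + 1 by linarith)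
    rw [gaussKL_total] at h4
    linarith
  constructor
  · exact mul_pos (inv_pos.2 sqrt2pi_pos) hIic_pos
  · rw [show (1:ℝ) = (Real.sqrt (2*Real.pi))⁻¹ * Real.sqrt (2*Real.pi) by
      field_simp]
    exact mul_lt_mul_of_pos_left hIic_lt (inv_pos.2 sqrt2pi_pos)

lemma momentKL (s a b : ℝ) :
    ∫ t, ((Real.sqrt (2 * Real.pi))⁻¹ * gaussKL t) *
      (Real.exp (-(s^2/2) + s * t) * (a + b * t)) = a + b * s := by
  set c := Real.sqrt (2 * Real.pi) with hc
  have hc0 : c ≠ 0 := ne_of_gt sqrt2pi_pos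
  have hpt : ∀ t : ℝ, (c⁻¹ * gaussKL t) * (Real.exp (-(s^2/2) + s * t) * (a + b * t)) =
      c⁻¹ * gaussKL (t - s) * (a + b * ((t - s) + s)) := by
    intro t
    unfold gaussKL
    have hexp : Real.exp (-(t^2)/2) * Real.exp (-(s^2/2) + s*t) =
        Real.exp (-((t-s)^2)/2) := by
      rw [← Real.exp_add]; congr 1; ring
    calc c⁻¹ * Real.exp (-(t^2)/2) * (Real.exp (-(s^2/2) + s*t) * (a + b * t))
        = c⁻¹ * (Real.exp (-(t^2)/2) * Real.exp (-(s^2/2) + s*t)) * (a + b * t) := by ring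
      _ = c⁻¹ * Real.exp (-((t-s)^2)/2) * (a + b * ((t-s)+s)) := by rw [hexp]; ring_nf
  simp_rw [hpt]
  rw [show (∫ t, c⁻¹ * gaussKL (t - s) * (a + b * ((t - s) + s))) =
      ∫ t, (fun u => c⁻¹ * gaussKL u * (a + b * (u + s))) (t - s) from rfl]
  rw [integral_sub_right_eq_self (fun u => c⁻¹ * gaussKL u * (a + b * (u + s))) s]
  have hpt2 : ∀ u : ℝ, c⁻¹ * gaussKL u * (a + b * (u + s)) =
      (c⁻¹ * (a + b * s)) * gaussKL u + (c⁻¹ * b) * (u * gaussKL u) := by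
    intro u; ring
  simp_rw [hpt2]
  rw [integral_add ((gaussKL_int.const_mul _)) ((id_gaussKL_int.const_mul _)),
    integral_const_mul, integral_const_mul, gaussKL_total, id_gaussKL_zero]
  rw [mul_zero, add_zero, mul_comm, ← mul_assoc, mul_inv_cancel₀ hc0, one_mul]


lemma sqrtKL_sub_le {a b : ℝ} (hb : 0 ≤ b) (h : b ≤ a) :
    Real.sqrt a - Real.sqrt b ≤ Real.sqrt (a - b) := by
  have key : Real.sqrt a ≤ Real.sqrt b + Real.sqrt (a - b) := by
    rw [← Real.sqrt_sq (by positivity : (0:ℝ) ≤ Real.sqrt b + Real.sqrt (a - b))]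
    apply Real.sqrt_le_sqrt
    have h1 := Real.sq_sqrt hb
    have h2 := Real.sq_sqrt (sub_nonneg.2 h)
    nlinarith [mul_nonneg (Real.sqrt_nonneg b) (Real.sqrt_nonneg (a - b))]
  linarith

lemma abs_sqrtKL_sub {a b : ℝ} (ha : 0 ≤ a) (hb : 0 ≤ b) :
    |Real.sqrt a - Real.sqrt b| ≤ Real.sqrt |a - b| := by
  rcases le_total b a with h | h
  · rw [abs_of_nonneg (sub_nonneg.2 (Real.sqrt_le_sqrt h)),
      abs_of_nonneg (sub_nonneg.2 h)]
    exact sqrtKL_sub_le hb h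
  · rw [abs_of_nonpos (sub_nonpos.2 (Real.sqrt_le_sqrt h)), abs_of_nonpos (sub_nonpos.2 h),
      neg_sub, neg_sub]
    exact sqrtKL_sub_le ha h

end KLAux

/-- For `θ₁, θ₂ ∈ [0,1]`,
`KL(f_{θ₁}, f_{θ₂}) = (θ₂ − θ₁) + √(2θ₁)(√(2θ₁) − √(2θ₂))`, where
`f_θ(x) = exp(-θ + √(2θ)·Φ⁻¹(x))` on `[0,1)`; in particular the KL divergence
tends to `0` as `|θ₁ − θ₂| → 0`. -/
theorem stmt1
    (Φinv : ℝ → ℝ)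
    (hΦinv : ∀ x ∈ Set.Ioo (0:ℝ) 1,
      (Real.sqrt (2 * Real.pi))⁻¹ * ∫ t in Set.Iic (Φinv x), Real.exp (-(t ^ 2) / 2) = x) :
    (∀ θ₁ ∈ Set.Icc (0:ℝ) 1, ∀ θ₂ ∈ Set.Icc (0:ℝ) 1,
      ∫ x in Set.Ico (0:ℝ) 1,
          Real.exp (-θ₁ + Real.sqrt (2 * θ₁) * Φinv x) *
            Real.log (Real.exp (-θ₁ + Real.sqrt (2 * θ₁) * Φinv x) /
              Real.exp (-θ₂ + Real.sqrt (2 * θ₂) * Φinv x))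
        = (θ₂ - θ₁) + Real.sqrt (2 * θ₁) * (Real.sqrt (2 * θ₁) - Real.sqrt (2 * θ₂)))
    ∧
    (∀ ε > (0:ℝ), ∃ δ > (0:ℝ), ∀ θ₁ ∈ Set.Icc (0:ℝ) 1, ∀ θ₂ ∈ Set.Icc (0:ℝ) 1,
      |θ₁ - θ₂| < δ →
      |∫ x in Set.Ico (0:ℝ) 1,
          Real.exp (-θ₁ + Real.sqrt (2 * θ₁) * Φinv x) *
            Real.log (Real.exp (-θ₁ + Real.sqrt (2 * θ₁) * Φinv x) /
              Real.exp (-θ₂ + Real.sqrt (2 * θ₂) * Φinv x))| < ε) := by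
  have hPhiinv : ∀ x ∈ Set.Ioo (0:ℝ) 1, PhiKL (Φinv x) = x := by
    intro x hx
    exact hΦinv x hx
  have hleft : ∀ t : ℝ, Φinv (PhiKL t) = t := fun t =>
    PhiKL_strictMono.injective (hPhiinv _ (PhiKL_mem t))
  have himg : PhiKL '' Set.univ = Set.Ioo (0:ℝ) 1 := by
    ext x
    constructor
    · rintro ⟨t, -, rfl⟩; exact PhiKL_mem t
    · intro hx; exact ⟨Φinv x, trivial, hPhiinv x hx⟩
  have hcov : ∀ g : ℝ → ℝ, ∫ x in Set.Ico (0:ℝ) 1, g (Φinv x) =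
      ∫ t, ((Real.sqrt (2 * Real.pi))⁻¹ * gaussKL t) * g t := by
    intro g
    rw [integral_Ico_eq_integral_Ioo, ← himg,
      integral_image_eq_integral_abs_deriv_smul MeasurableSet.univ
        (fun t _ => (PhiKL_hasDeriv t).hasDerivWithinAt)
        (PhiKL_strictMono.injective.injOn) (fun x => g (Φinv x))]
    rw [Measure.restrict_univ]
    congr 1
    ext t
    rw [hleft t, smul_eq_mul,
      abs_of_pos (mul_pos (inv_pos.2 sqrt2pi_pos) (gaussKL_pos t))]
  have key : ∀ θ₁ ∈ Set.Icc (0:ℝ) 1, ∀ θ₂ ∈ Set.Icc (0:ℝ) 1,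
      ∫ x in Set.Ico (0:ℝ) 1,
          Real.exp (-θ₁ + Real.sqrt (2 * θ₁) * Φinv x) *
            Real.log (Real.exp (-θ₁ + Real.sqrt (2 * θ₁) * Φinv x) /
              Real.exp (-θ₂ + Real.sqrt (2 * θ₂) * Φinv x))
        = (θ₂ - θ₁) + Real.sqrt (2 * θ₁) * (Real.sqrt (2 * θ₁) - Real.sqrt (2 * θ₂)) := by
    intro θ₁ h₁ θ₂ h₂
    set s₁ := Real.sqrt (2 * θ₁) with hs₁def
    set s₂ := Real.sqrt (2 * θ₂) with hs₂def
    have hs₁ : s₁ ^ 2 = 2 * θ₁ := Real.sq_sqrt (by linarith [h₁.1])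
    have hpt : ∀ t : ℝ,
        Real.exp (-θ₁ + s₁ * t) * Real.log (Real.exp (-θ₁ + s₁ * t) /
          Real.exp (-θ₂ + s₂ * t)) =
        Real.exp (-(s₁^2/2) + s₁ * t) * ((θ₂ - θ₁) + (s₁ - s₂) * t) := by
      intro t
      rw [Real.log_div (Real.exp_ne_zero _) (Real.exp_ne_zero _), Real.log_exp,
        Real.log_exp]
      rw [show -(s₁^2/2) = -θ₁ by rw [hs₁]; ring]
      ring
    have h1 : (∫ x in Set.Ico (0:ℝ) 1,
          Real.exp (-θ₁ + s₁ * Φinv x) * Real.log (Real.exp (-θ₁ + s₁ * Φinv x) /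
            Real.exp (-θ₂ + s₂ * Φinv x)))
        = ∫ x in Set.Ico (0:ℝ) 1,
            (fun t => Real.exp (-(s₁^2/2) + s₁ * t) * ((θ₂ - θ₁) + (s₁ - s₂) * t)) (Φinv x) :=
      integral_congr_ae (Filter.Eventually.of_forall fun x => hpt (Φinv x))
    rw [h1, hcov (fun t => Real.exp (-(s₁^2/2) + s₁ * t) * ((θ₂ - θ₁) + (s₁ - s₂) * t)),
      momentKL]
    ring
  refine ⟨key, ?_⟩
  intro ε hε
  refine ⟨min 1 (ε^2/9), lt_min one_pos (by positivity), ?_⟩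
  intro θ₁ h₁ θ₂ h₂ hδ
  rw [key θ₁ h₁ θ₂ h₂]
  set s₁ := Real.sqrt (2 * θ₁) with hs₁def
  set s₂ := Real.sqrt (2 * θ₂) with hs₂def
  have hm : |θ₁ - θ₂| < min 1 (ε^2/9) := hδ
  set m := |θ₁ - θ₂| with hmdef
  have hm0 : 0 ≤ m := abs_nonneg _
  have hs₁le : s₁ ≤ Real.sqrt 2 := Real.sqrt_le_sqrt (by linarith [h₁.2])
  have hs₁0 : 0 ≤ s₁ := Real.sqrt_nonneg _
  have hdiff : |s₁ - s₂| ≤ Real.sqrt (2 * m) := by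
    have := abs_sqrtKL_sub (a := 2*θ₁) (b := 2*θ₂) (by linarith [h₁.1]) (by linarith [h₂.1])
    calc |s₁ - s₂| ≤ Real.sqrt |2*θ₁ - 2*θ₂| := this
      _ = Real.sqrt (2 * m) := by
          rw [hmdef, show 2*θ₁ - 2*θ₂ = 2*(θ₁-θ₂) by ring, abs_mul, abs_two]
  have hmain : |(θ₂ - θ₁) + s₁ * (s₁ - s₂)| ≤ m + 2 * Real.sqrt m := by
    calc |(θ₂ - θ₁) + s₁ * (s₁ - s₂)| ≤ |θ₂ - θ₁| + |s₁ * (s₁ - s₂)| := abs_add_le _ _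
      _ = m + s₁ * |s₁ - s₂| := by rw [abs_sub_comm θ₂ θ₁, abs_mul, abs_of_nonneg hs₁0]
      _ ≤ m + Real.sqrt 2 * Real.sqrt (2 * m) :=
          add_le_add le_rfl (mul_le_mul hs₁le hdiff (abs_nonneg _) (Real.sqrt_nonneg _))
      _ = m + 2 * Real.sqrt m := by
          rw [← Real.sqrt_mul (by norm_num : (0:ℝ) ≤ 2), show (2:ℝ)*(2*m) = 4*m by ring,
            Real.sqrt_mul (by norm_num : (0:ℝ) ≤ 4),
            show Real.sqrt 4 = 2 by
              rw [show (4:ℝ) = 2^2 by norm_num, Real.sqrt_sq (by norm_num : (0:ℝ) ≤ 2)]]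
  have h5 : Real.sqrt m < Real.sqrt (min 1 (ε^2/9)) := Real.sqrt_lt_sqrt hm0 hm
  have h6 : Real.sqrt (min 1 (ε^2/9)) ≤ ε/3 := by
    calc Real.sqrt (min 1 (ε^2/9)) ≤ Real.sqrt (ε^2/9) :=
          Real.sqrt_le_sqrt (min_le_right _ _)
      _ = ε/3 := by
          rw [show ε^2/9 = (ε/3)^2 by ring, Real.sqrt_sq (by positivity)]
  have h7 : m ≤ Real.sqrt m := by
    have hm1 : m ≤ 1 := le_of_lt (lt_of_lt_of_le hm (min_le_left _ _))
    have := Real.sqrt_le_sqrt (show m^2 ≤ m by nlinarith)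
    rwa [Real.sqrt_sq hm0] at this
  linarith
end

section
/- Let X₁,…,Xₙ be i.i.d. with density f_★, let Π be a probability measure on a measurable space of densities, and let A be a measurable set of densities each at Hellinger distance at least ε from f_★. Then E[∫_A Rₙ(f)^{1/2} Π(df)] ≤ (1 − ε²/2)ⁿ ≤ e^{−nε²/2}, where Rₙ(f) = ∏ᵢ f(Xᵢ)/f_★(Xᵢ). -/
open MeasureTheory ENNReal Set

lemma lintegral_pi_prod_aux {α : Type*} [MeasurableSpace α] (μ : Measure α) [SigmaFinite μ]
    (h : α → ℝ≥0∞) (hm : Measurable h) :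
    ∀ n : ℕ, ∫⁻ x : Fin n → α, ∏ i, h (x i) ∂(Measure.pi fun _ : Fin n => μ)
      = (∫⁻ y, h y ∂μ) ^ n := by
  intro n
  induction n with
  | zero =>
      rw [Measure.pi_of_empty]
      simp
  | succ n ih =>
      have hmp : MeasurePreserving (MeasurableEquiv.piFinSuccAbove (fun _ : Fin (n+1) => α) 0)
          (Measure.pi fun _ => μ) (μ.prod (Measure.pi fun _ : Fin n => μ)) :=
        measurePreserving_piFinSuccAbove (fun _ => μ) 0
      have hg : Measurable fun p : α × (Fin n → α) => h p.1 * ∏ j, h (p.2 j) :=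
        ((hm.comp measurable_fst).mul
          (Finset.measurable_prod _ fun j _ => hm.comp ((measurable_pi_apply j).comp
            measurable_snd)))
      calc ∫⁻ x : Fin (n+1) → α, ∏ i, h (x i) ∂(Measure.pi fun _ => μ)
          = ∫⁻ x : Fin (n+1) → α,
              (fun p : α × (Fin n → α) => h p.1 * ∏ j, h (p.2 j))
                ((MeasurableEquiv.piFinSuccAbove (fun _ : Fin (n+1) => α) 0) x)
              ∂(Measure.pi fun _ => μ) := by
            refine lintegral_congr fun x => ?_
            simp [MeasurableEquiv.piFinSuccAbove_apply, Fin.prod_univ_succ, Fin.removeNth,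
              Fin.tail, Fin.succAbove]
        _ = ∫⁻ p : α × (Fin n → α), h p.1 * ∏ j, h (p.2 j)
              ∂(μ.prod (Measure.pi fun _ : Fin n => μ)) := hmp.lintegral_comp hg
        _ = (∫⁻ y, h y ∂μ) * ∫⁻ x : Fin n → α, ∏ j, h (x j) ∂(Measure.pi fun _ : Fin n => μ) :=
            lintegral_prod_mul hm.aemeasurable
              (Finset.measurable_prod _ fun j _ => hm.comp (measurable_pi_apply j)).aemeasurable
        _ = (∫⁻ y, h y ∂μ) ^ (n + 1) := by rw [ih]; ring

/-- For `X₁,…,Xₙ` i.i.d. with density `f_★`, a prior `Prior` on a space of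
densities, and a measurable set `A` of densities each at Hellinger distance at least
`ε` from `f_★`, `E[∫_A Rₙ(f)^{1/2} Prior(df)] ≤ (1 − ε²/2)ⁿ ≤ e^{−nε²/2}`. -/
theorem stmt7 {α F : Type*} [MeasurableSpace α] [MeasurableSpace F]
    (lam : Measure α) [SigmaFinite lam]
    (fstar : α → ℝ) (hfstar_meas : Measurable fstar) (hfstar0 : ∀ x, 0 ≤ fstar x)
    (hfstar1 : ∫ x, fstar x ∂lam = 1)
    (d : F → α → ℝ) (hd_meas : Measurable (Function.uncurry d))
    (hd0 : ∀ f x, 0 ≤ d f x) (hd1 : ∀ f, ∫ x, d f x ∂lam = 1)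
    (Prior : Measure F) [IsProbabilityMeasure Prior]
    (A : Set F) (hA : MeasurableSet A)
    (ε : ℝ) (hε : 0 < ε) (hε2 : ε ≤ Real.sqrt 2)
    (hAfar : ∀ f ∈ A,
      ε ≤ Real.sqrt (∫ x, (Real.sqrt (d f x) - Real.sqrt (fstar x)) ^ 2 ∂lam))
    (n : ℕ) :
    ∫⁻ x : Fin n → α,
        (∫⁻ f in A, (∏ i, ENNReal.ofReal (d f (x i) / fstar (x i))) ^ ((1:ℝ)/2) ∂Prior)
        ∂(Measure.pi fun _ : Fin n => lam.withDensity fun y => ENNReal.ofReal (fstar y))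
      ≤ ENNReal.ofReal ((1 - ε ^ 2 / 2) ^ n)
    ∧ ENNReal.ofReal ((1 - ε ^ 2 / 2) ^ n) ≤ ENNReal.ofReal (Real.exp (-(n : ℝ) * ε ^ 2 / 2)) := by
  have h1e : 0 ≤ 1 - ε ^ 2 / 2 := by
    have h2 : ε ^ 2 ≤ Real.sqrt 2 ^ 2 := pow_le_pow_left₀ hε.le hε2 2
    rw [Real.sq_sqrt (by norm_num : (0:ℝ) ≤ 2)] at h2
    linarith
  constructor
  · -- main inequality
    have hd_measf : ∀ f, Measurable (d f) := fun f => hd_meas.of_uncurry_left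
    have hfs_int : Integrable fstar lam := by
      by_contra h
      rw [integral_undef h] at hfstar1
      norm_num at hfstar1
    have hd_int : ∀ f, Integrable (d f) lam := by
      intro f
      by_contra h
      have := hd1 f
      rw [integral_undef h] at this
      norm_num at this
    set μ0 : Measure α := lam.withDensity fun y => ENNReal.ofReal (fstar y) with hμ0
    have hprob : IsProbabilityMeasure μ0 := by
      constructor
      rw [hμ0, withDensity_apply _ MeasurableSet.univ, Measure.restrict_univ,
        ← ofReal_integral_eq_lintegral_ofReal hfs_int (ae_of_all _ hfstar0), hfstar1,
        ENNReal.ofReal_one]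
    -- the single-observation bound
    have hkey : ∀ f ∈ A,
        ∫⁻ y, ENNReal.ofReal (d f y / fstar y) ^ ((1:ℝ)/2) ∂μ0
          ≤ ENNReal.ofReal (1 - ε ^ 2 / 2) := by
      intro f hf
      have hsq_meas : Measurable fun x => Real.sqrt (d f x) * Real.sqrt (fstar x) :=
        (Real.continuous_sqrt.measurable.comp (hd_measf f)).mul
          (Real.continuous_sqrt.measurable.comp hfstar_meas)
      have hsr : Integrable (fun x => Real.sqrt (d f x) * Real.sqrt (fstar x)) lam := by
        refine Integrable.mono (((hd_int f).add hfs_int).div_const 2)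
          hsq_meas.aestronglyMeasurable (ae_of_all _ fun x => ?_)
        have h1 := Real.sq_sqrt (hd0 f x)
        have h2 := Real.sq_sqrt (hfstar0 x)
        have h3 := Real.sqrt_nonneg (d f x)
        have h4 := Real.sqrt_nonneg (fstar x)
        have h5 := hd0 f x
        have h6 := hfstar0 x
        simp only [Pi.add_apply, Real.norm_eq_abs]
        rw [abs_of_nonneg (mul_nonneg h3 h4), abs_of_nonneg (by positivity)]
        nlinarith [sq_nonneg (Real.sqrt (d f x) - Real.sqrt (fstar x))]
      have hid : ∀ x, (Real.sqrt (d f x) - Real.sqrt (fstar x)) ^ 2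
          = d f x + fstar x - 2 * (Real.sqrt (d f x) * Real.sqrt (fstar x)) := by
        intro x
        have h1 := Real.sq_sqrt (hd0 f x)
        have h2 := Real.sq_sqrt (hfstar0 x)
        nlinarith
      have hI : ∫ x, (Real.sqrt (d f x) - Real.sqrt (fstar x)) ^ 2 ∂lam
          = 2 - 2 * ∫ x, Real.sqrt (d f x) * Real.sqrt (fstar x) ∂lam := by
        rw [integral_congr_ae (ae_of_all _ hid), integral_sub (show Integrable (fun x => d f x + fstar x) lam from (hd_int f).add hfs_int)
          (hsr.const_mul 2), integral_add (hd_int f) hfs_int, hd1 f, hfstar1,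
          integral_const_mul]
        ring
      have hε2' : ε ^ 2 ≤ ∫ x, (Real.sqrt (d f x) - Real.sqrt (fstar x)) ^ 2 ∂lam :=
        (Real.le_sqrt' hε).mp (hAfar f hf)
      have hle : ∫ x, Real.sqrt (d f x) * Real.sqrt (fstar x) ∂lam ≤ 1 - ε ^ 2 / 2 := by
        rw [hI] at hε2'; linarith
      have hmeas_g : Measurable fun y => ENNReal.ofReal (d f y / fstar y) ^ ((1:ℝ)/2) :=
        ENNReal.continuous_rpow_const.measurable.comp
          ((((hd_measf f).div hfstar_meas).ennreal_ofReal))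
      calc ∫⁻ y, ENNReal.ofReal (d f y / fstar y) ^ ((1:ℝ)/2) ∂μ0
          = ∫⁻ y, ((fun y => ENNReal.ofReal (fstar y)) *
              fun y => ENNReal.ofReal (d f y / fstar y) ^ ((1:ℝ)/2)) y ∂lam :=
            lintegral_withDensity_eq_lintegral_mul lam hfstar_meas.ennreal_ofReal hmeas_g
        _ = ∫⁻ y, ENNReal.ofReal (Real.sqrt (d f y) * Real.sqrt (fstar y)) ∂lam := by
            refine lintegral_congr fun y => ?_
            simp only [Pi.mul_apply]
            rw [ENNReal.ofReal_rpow_of_nonneg (div_nonneg (hd0 f y) (hfstar0 y))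
              (by norm_num), ← ENNReal.ofReal_mul (hfstar0 y), ← Real.sqrt_eq_rpow]
            congr 1
            rcases eq_or_lt_of_le (hfstar0 y) with h0 | h0
            · rw [← h0]
              simp
            · rw [Real.sqrt_div (hd0 f y)]
              have hs : Real.sqrt (fstar y) ≠ 0 :=
                ne_of_gt (Real.sqrt_pos.mpr h0)
              field_simp
              rw [Real.sq_sqrt h0.le]
              ring
        _ = ENNReal.ofReal (∫ x, Real.sqrt (d f x) * Real.sqrt (fstar x) ∂lam) :=
            (ofReal_integral_eq_lintegral_ofReal hsr (ae_of_all _ fun x =>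
              mul_nonneg (Real.sqrt_nonneg _) (Real.sqrt_nonneg _))).symm
        _ ≤ ENNReal.ofReal (1 - ε ^ 2 / 2) := ENNReal.ofReal_le_ofReal hle
    -- measurability of the joint integrand
    have hK_meas : Measurable (Function.uncurry fun (x : Fin n → α) (f : F) =>
        ∏ i, ENNReal.ofReal (d f (x i) / fstar (x i)) ^ ((1:ℝ)/2)) := by
      refine Finset.measurable_prod _ fun i _ => ?_
      refine ENNReal.continuous_rpow_const.measurable.comp (Measurable.ennreal_ofReal ?_)
      exact (hd_meas.comp (measurable_snd.prodMk
        ((measurable_pi_apply i).comp measurable_fst))).div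
        (hfstar_meas.comp ((measurable_pi_apply i).comp measurable_fst))
    calc ∫⁻ x : Fin n → α, (∫⁻ f in A,
            (∏ i, ENNReal.ofReal (d f (x i) / fstar (x i))) ^ ((1:ℝ)/2) ∂Prior)
          ∂(Measure.pi fun _ : Fin n => μ0)
        = ∫⁻ x : Fin n → α, (∫⁻ f,
            ∏ i, ENNReal.ofReal (d f (x i) / fstar (x i)) ^ ((1:ℝ)/2) ∂Prior.restrict A)
          ∂(Measure.pi fun _ : Fin n => μ0) := by
          refine lintegral_congr fun x => lintegral_congr fun f => ?_
          rw [← ENNReal.prod_rpow_of_nonneg (by norm_num : (0:ℝ) ≤ 1/2)]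
      _ = ∫⁻ f, (∫⁻ x : Fin n → α,
            ∏ i, ENNReal.ofReal (d f (x i) / fstar (x i)) ^ ((1:ℝ)/2)
            ∂(Measure.pi fun _ : Fin n => μ0)) ∂Prior.restrict A :=
          lintegral_lintegral_swap hK_meas.aemeasurable
      _ ≤ ∫⁻ _ in A, ENNReal.ofReal ((1 - ε ^ 2 / 2) ^ n) ∂Prior := by
          refine setLIntegral_mono measurable_const fun f hf => ?_
          rw [lintegral_pi_prod_aux μ0
            (fun y => ENNReal.ofReal (d f y / fstar y) ^ ((1:ℝ)/2))
            (ENNReal.continuous_rpow_const.measurable.comp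
              (((hd_measf f).div hfstar_meas).ennreal_ofReal)) n,
            ENNReal.ofReal_pow h1e]
          exact pow_le_pow_left' (hkey f hf) n
      _ = ENNReal.ofReal ((1 - ε ^ 2 / 2) ^ n) * Prior A := setLIntegral_const A _
      _ ≤ ENNReal.ofReal ((1 - ε ^ 2 / 2) ^ n) * 1 := by
          gcongr
          exact prob_le_one
      _ = ENNReal.ofReal ((1 - ε ^ 2 / 2) ^ n) := mul_one _
  · refine ENNReal.ofReal_le_ofReal ?_
    have hx : -(n : ℝ) * ε ^ 2 / 2 = n * (-(ε ^ 2 / 2)) := by ring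
    rw [hx, Real.exp_nat_mul]
    refine pow_le_pow_left₀ h1e ?_ n
    linarith [Real.add_one_le_exp (-(ε ^ 2 / 2))]
end
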